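/- arXiv:2212.00431 — 7 statements merged into one kernel-verified Lean document; each statement's English description precedes it below -/
import Mathlib

section
/- There is no triple x, y, z ∈ F_{q^m}^n with d_BR(x,y) strictly dominating d_BR(x,z) + d_BR(z,y) in the componentwise partial order on ℕ², where d_BR(x,y) = (d_b(x,y), d_r(x,y)). -/
open Finset
open scoped Classical

/-- The base distance: the number of coordinates of `x - y` that are nonzero
elements of the base subfield `F`. -/
noncomputable def db {K : Type*} [Field K] (F : Subfield K) {n : ℕ} (x y : Fin n → K) : ℕ :=
  (univ.filter fun i => (x - y) i ∈ F ∧ (x - y) i ≠ 0).card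

/-- The roof distance: the number of coordinates of `x - y` outside `F`. -/
noncomputable def dr {K : Type*} [Field K] (F : Subfield K) {n : ℕ} (x y : Fin n → K) : ℕ :=
  (univ.filter fun i => (x - y) i ∉ F).card

lemma db_add_dr {K : Type*} [Field K] (F : Subfield K) {n : ℕ} (x y : Fin n → K) :
    db F x y + dr F x y = hammingDist x y := by
  rw [db, dr, hammingDist, ← Finset.card_union_of_disjoint, ← Finset.filter_or]
  · congr 1
    apply Finset.filter_congr
    intro i _
    constructor
    · rintro (⟨-, h⟩ | h) hxy
      · exact h (by simp [Pi.sub_apply, sub_eq_zero, hxy])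
      · exact h (by simp only [Pi.sub_apply, hxy, sub_self]; exact F.zero_mem)
    · intro h
      by_cases hF : (x - y) i ∈ F
      · exact Or.inl ⟨hF, fun h0 => h (sub_eq_zero.mp h0)⟩
      · exact Or.inr hF
  · rw [Finset.disjoint_filter]
    tauto

/-- There is no triple `x, y, z` with `d_BR(x,y)` strictly dominating
`d_BR(x,z) + d_BR(z,y)` in the componentwise partial order on `ℕ²`, where
`d_BR(x,y) = (d_b(x,y), d_r(x,y))`. -/
theorem no_strict_domination_BR
    {q m : ℕ} (hq : ∃ p s : ℕ, p.Prime ∧ 0 < s ∧ q = p ^ s) (hm : 2 ≤ m)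
    {K : Type*} [Field K] [Fintype K] (F : Subfield K)
    (hcardF : Fintype.card F = q) (hcardK : Fintype.card K = q ^ m) {n : ℕ} :
    ∀ x y z : Fin n → K,
      ¬ (db F x z + db F z y ≤ db F x y ∧ dr F x z + dr F z y ≤ dr F x y ∧
          (db F x z + db F z y, dr F x z + dr F z y) ≠ (db F x y, dr F x y)) := by
  intro x y z ⟨h1, h2, h3⟩
  have ht : hammingDist x y ≤ hammingDist x z + hammingDist z y := hammingDist_triangle x z y
  have e1 := db_add_dr F x y
  have e2 := db_add_dr F x z
  have e3 := db_add_dr F z y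
  have : db F x z + db F z y = db F x y ∧ dr F x z + dr F z y = dr F x y := by omega
  exact h3 (by rw [this.1, this.2])
end

section
/- For a positive integer radius d with 0 ≤ d ≤ λn and integer λ ≥ 1, the number of vectors in F_{q^m}^n of λ-subfield weight exactly d equals Σ_{i=0}^{⌊d/λ⌋} (q^m−q)^i · C(n,i) · (q−1)^{d−λi} · C(n−i, d−λi). -/
open Finset
open scoped Classical

/-- The `λ`-subfield weight for an integer `λ`, with values in `ℕ`. -/
noncomputable def wtlN {K : Type*} [Field K] (F : Subfield K) (lam : ℕ) {n : ℕ}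
    (x : Fin n → K) : ℕ :=
  ∑ i, if x i = 0 then 0 else if x i ∈ F then 1 else lam



lemma wtlN_eq {K : Type*} [Field K] (F : Subfield K) (lam : ℕ) {n : ℕ} (x : Fin n → K) :
    wtlN F lam x = lam * (univ.filter fun i => x i ∉ F).card
      + (univ.filter fun i => x i ≠ 0 ∧ x i ∈ F).card := by
  unfold wtlN
  rw [Finset.card_filter, Finset.card_filter, Finset.mul_sum, ← Finset.sum_add_distrib]
  apply Finset.sum_congr rfl
  intro i _
  by_cases h0 : x i = 0
  · simp [h0, F.zero_mem]
  · by_cases hF : x i ∈ F <;> simp [h0, hF]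


lemma fiber_card {K : Type*} [Field K] [Fintype K] (F : Subfield K) {n : ℕ}
    (A B : Finset (Fin n)) (hAB : Disjoint A B) :
    (univ.filter fun x : Fin n → K =>
       (univ.filter fun i => x i ∉ F) = A ∧ (univ.filter fun i => x i ≠ 0 ∧ x i ∈ F) = B).card
    = (univ.filter fun a : K => a ∉ F).card ^ A.card
      * (univ.filter fun a : K => a ≠ 0 ∧ a ∈ F).card ^ B.card := by
  classical
  have hset : (univ.filter fun x : Fin n → K =>
       (univ.filter fun i => x i ∉ F) = A ∧ (univ.filter fun i => x i ≠ 0 ∧ x i ∈ F) = B)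
      = Fintype.piFinset (fun i : Fin n =>
          if i ∈ A then univ.filter (fun a : K => a ∉ F)
          else if i ∈ B then univ.filter (fun a : K => a ≠ 0 ∧ a ∈ F)
          else {0}) := by
    ext x
    simp only [mem_filter, mem_univ, true_and, Fintype.mem_piFinset]
    constructor
    · rintro ⟨hA, hB⟩ i
      by_cases hiA : i ∈ A
      · have : x i ∉ F := by
          have := Finset.ext_iff.mp hA i
          simp at this; tauto
        simp [hiA, this]
      · by_cases hiB : i ∈ B
        · have : x i ≠ 0 ∧ x i ∈ F := by
            have := Finset.ext_iff.mp hB i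
            simp at this; tauto
          simp [hiA, hiB, this.1, this.2]
        · have h1 : ¬ (x i ∉ F) := by
            have := Finset.ext_iff.mp hA i
            simp at this; tauto
          have h2 : ¬ (x i ≠ 0 ∧ x i ∈ F) := by
            have := Finset.ext_iff.mp hB i
            simp at this; tauto
          push_neg at h1 h2
          have h0 : x i = 0 := by by_contra h0; exact h2 h0 h1
          simp [hiA, hiB, h0]
    · intro h
      constructor
      · ext i
        simp only [mem_filter, mem_univ, true_and]
        constructor
        · intro hx
          by_contra hiA
          have := h i
          by_cases hiB : i ∈ B
          · simp [hiA, hiB] at this; exact hx this.2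
          · simp [hiA, hiB] at this; exact hx (this ▸ F.zero_mem)
        · intro hiA
          have := h i; simp [hiA] at this; exact this
      · ext i
        simp only [mem_filter, mem_univ, true_and]
        constructor
        · intro hx
          by_contra hiB
          have := h i
          by_cases hiA : i ∈ A
          · simp [hiA] at this; exact this hx.2
          · simp [hiA, hiB] at this; exact hx.1 this
        · intro hiB
          have hiA : i ∉ A := fun hiA => (Finset.disjoint_left.mp hAB hiA) hiB
          have := h i; simp [hiA, hiB] at this; exact this
  rw [hset, Fintype.card_piFinset]
  rw [← Finset.prod_mul_prod_compl A]
  congr 1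
  · trans ∏ _i ∈ A, (univ.filter (fun a : K => a ∉ F)).card
    · exact Finset.prod_congr rfl (fun i hi => by simp [hi])
    · exact Finset.prod_const _
  · have hBsub : B ⊆ Aᶜ := by
      intro i hi
      simp only [Finset.mem_compl]
      exact fun hiA => (Finset.disjoint_left.mp hAB hiA) hi
    calc ∏ i ∈ Aᶜ, (if i ∈ A then (univ.filter (fun a : K => a ∉ F))
          else if i ∈ B then univ.filter (fun a : K => a ≠ 0 ∧ a ∈ F) else {0}).card
        = ∏ i ∈ Aᶜ, (if i ∈ B then (univ.filter (fun a : K => a ≠ 0 ∧ a ∈ F)).card else 1) := by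
          apply Finset.prod_congr rfl
          intro i hi
          simp only [Finset.mem_compl] at hi
          by_cases hiB : i ∈ B <;> simp [hi, hiB]
      _ = ∏ i ∈ Aᶜ.filter (· ∈ B), (univ.filter (fun a : K => a ≠ 0 ∧ a ∈ F)).card :=
          (Finset.prod_filter _ _).symm
      _ = _ := by
          rw [Finset.filter_mem_eq_inter, Finset.inter_eq_right.mpr hBsub, Finset.prod_const]


lemma card_memF {K : Type*} [Field K] [Fintype K] (F : Subfield K) :
    (univ.filter fun a : K => a ∈ F).card = Fintype.card F := by
  rw [Fintype.card_subtype]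

lemma card_notF {K : Type*} [Field K] [Fintype K] (F : Subfield K) :
    (univ.filter fun a : K => a ∉ F).card = Fintype.card K - Fintype.card F := by
  rw [Finset.filter_not, Finset.card_sdiff_of_subset (Finset.filter_subset _ _), Finset.card_univ,
    card_memF]

lemma card_Fne {K : Type*} [Field K] [Fintype K] (F : Subfield K) :
    (univ.filter fun a : K => a ≠ 0 ∧ a ∈ F).card = Fintype.card F - 1 := by
  have : (univ.filter fun a : K => a ≠ 0 ∧ a ∈ F) = (univ.filter fun a : K => a ∈ F).erase 0 := by
    ext a
    simp [and_comm, eq_comm, Finset.mem_erase]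
  rw [this, Finset.card_erase_of_mem (by simp [F.zero_mem]), card_memF]

lemma card_disjoint_pairs (n i j : ℕ) :
    (univ.filter fun p : Finset (Fin n) × Finset (Fin n) =>
        Disjoint p.1 p.2 ∧ p.1.card = i ∧ p.2.card = j).card
      = n.choose i * (n - i).choose j := by
  classical
  rw [Finset.card_eq_sum_card_fiberwise
    (f := Prod.fst) (t := Finset.powersetCard i (univ : Finset (Fin n)))
    (by intro p hp; simp only [mem_coe, mem_filter] at hp
        simp [Finset.mem_powersetCard, hp.2.2.1])]
  have hfib : ∀ A ∈ Finset.powersetCard i (univ : Finset (Fin n)),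
      (((univ.filter fun p : Finset (Fin n) × Finset (Fin n) =>
        Disjoint p.1 p.2 ∧ p.1.card = i ∧ p.2.card = j)).filter fun p => p.1 = A).card
      = (n - i).choose j := by
    intro A hA
    rw [Finset.mem_powersetCard] at hA
    have himg : ((univ.filter fun p : Finset (Fin n) × Finset (Fin n) =>
        Disjoint p.1 p.2 ∧ p.1.card = i ∧ p.2.card = j).filter fun p => p.1 = A)
        = (Finset.powersetCard j Aᶜ).image (fun B => (A, B)) := by
      ext p
      simp only [Finset.mem_filter, Finset.mem_image, Finset.mem_powersetCard, mem_univ, true_and]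
      constructor
      · rintro ⟨⟨hdisj, _, hcB⟩, h1⟩
        refine ⟨p.2, ⟨?_, hcB⟩, by rw [← h1]⟩
        intro a ha
        exact Finset.mem_compl.mpr (fun haA => Finset.disjoint_left.mp hdisj (h1 ▸ haA) ha)
      · rintro ⟨B, ⟨hsub, hcB⟩, rfl⟩
        refine ⟨⟨?_, hA.2, hcB⟩, rfl⟩
        exact Finset.disjoint_left.mpr fun a haA haB => by
          have := hsub haB; simp only [Finset.mem_compl] at this; exact this haA
    rw [himg, Finset.card_image_of_injective _ (fun B C h => (Prod.mk.injEq _ _ _ _).mp h |>.2),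
      Finset.card_powersetCard, Finset.card_compl, Fintype.card_fin, hA.2]
  rw [Finset.sum_congr rfl hfib, Finset.sum_const, Finset.card_powersetCard, Finset.card_univ,
    Fintype.card_fin, smul_eq_mul]

/-- For an integer `λ ≥ 1` and radius `0 ≤ d ≤ λn`, the number of vectors
in `F_{q^m}^n` of `λ`-subfield weight exactly `d` equals
`Σ_{i=0}^{⌊d/λ⌋} (q^m − q)^i C(n,i) (q−1)^{d−λi} C(n−i, d−λi)`. -/
theorem card_sphere_lambda_subfield
    {q m : ℕ} (hq : ∃ p s : ℕ, p.Prime ∧ 0 < s ∧ q = p ^ s) (hm : 2 ≤ m)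
    {K : Type*} [Field K] [Fintype K] (F : Subfield K)
    (hcardF : Fintype.card F = q) (hcardK : Fintype.card K = q ^ m)
    (lam : ℕ) (hlam : 1 ≤ lam) (n d : ℕ) (hd : d ≤ lam * n) :
    (univ.filter fun x : Fin n → K => wtlN F lam x = d).card =
      ∑ i ∈ Finset.range (d / lam + 1),
        (q ^ m - q) ^ i * n.choose i * (q - 1) ^ (d - lam * i) *
          (n - i).choose (d - lam * i) := by
  classical
  have hlam0 : 0 < lam := hlam
  have hAcard : (univ.filter fun a : K => a ∉ F).card = q ^ m - q := by
    rw [card_notF, hcardK, hcardF]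
  have hBcard : (univ.filter fun a : K => a ≠ 0 ∧ a ∈ F).card = q - 1 := by
    rw [card_Fne, hcardF]
  set T : Finset (Finset (Fin n) × Finset (Fin n)) :=
    univ.filter fun p => Disjoint p.1 p.2 ∧ lam * p.1.card + p.2.card = d with hT
  have hmap : ∀ x ∈ (univ.filter fun x : Fin n → K => wtlN F lam x = d),
      ((univ.filter fun i => x i ∉ F, univ.filter fun i => x i ≠ 0 ∧ x i ∈ F) :
        Finset (Fin n) × Finset (Fin n)) ∈ T := by
    intro x hx
    rw [mem_filter] at hx
    rw [hT, mem_filter]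
    refine ⟨mem_univ _, ?_, ?_⟩
    · rw [Finset.disjoint_left]
      intro a ha hb
      simp only [mem_filter] at ha hb
      exact ha.2 hb.2.2
    · rw [← wtlN_eq]; exact hx.2
  rw [Finset.card_eq_sum_card_fiberwise hmap]
  have hfib : ∀ p ∈ T,
      ((univ.filter fun x : Fin n → K => wtlN F lam x = d).filter fun x =>
        ((univ.filter fun i => x i ∉ F, univ.filter fun i => x i ≠ 0 ∧ x i ∈ F) :
          Finset (Fin n) × Finset (Fin n)) = p).card
      = (q ^ m - q) ^ p.1.card * (q - 1) ^ p.2.card := by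
    intro p hp
    rw [hT, mem_filter] at hp
    obtain ⟨-, hdisj, hsum⟩ := hp
    have hset : ((univ.filter fun x : Fin n → K => wtlN F lam x = d).filter fun x =>
        ((univ.filter fun i => x i ∉ F, univ.filter fun i => x i ≠ 0 ∧ x i ∈ F) :
          Finset (Fin n) × Finset (Fin n)) = p)
        = univ.filter fun x : Fin n → K =>
            (univ.filter fun i => x i ∉ F) = p.1 ∧
            (univ.filter fun i => x i ≠ 0 ∧ x i ∈ F) = p.2 := by
      ext x
      simp only [Finset.mem_filter, mem_univ, true_and, Prod.ext_iff]
      constructor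
      · rintro ⟨-, h1, h2⟩; exact ⟨h1, h2⟩
      · rintro ⟨h1, h2⟩
        refine ⟨?_, h1, h2⟩
        rw [wtlN_eq, h1, h2, hsum]
    rw [hset, fiber_card F p.1 p.2 hdisj, hAcard, hBcard]
  rw [Finset.sum_congr rfl hfib]
  have hmaps2 : ∀ p ∈ T, p.1.card ∈ Finset.range (d / lam + 1) := by
    intro p hp
    rw [hT, mem_filter] at hp
    rw [Finset.mem_range, Nat.lt_succ_iff, Nat.le_div_iff_mul_le hlam0, mul_comm]
    omega
  rw [← Finset.sum_fiberwise_of_maps_to hmaps2]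
  apply Finset.sum_congr rfl
  intro i hi
  have hile : lam * i ≤ d := by
    rw [Finset.mem_range, Nat.lt_succ_iff, Nat.le_div_iff_mul_le hlam0] at hi
    rw [mul_comm]; exact hi
  have hTi : T.filter (fun p => p.1.card = i)
      = univ.filter fun p : Finset (Fin n) × Finset (Fin n) =>
          Disjoint p.1 p.2 ∧ p.1.card = i ∧ p.2.card = d - lam * i := by
    rw [hT, Finset.filter_filter]
    ext p
    simp only [Finset.mem_filter, mem_univ, true_and]
    constructor
    · rintro ⟨⟨hdisj, hsum⟩, hci⟩
      rw [hci] at hsum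
      exact ⟨hdisj, hci, by omega⟩
    · rintro ⟨hdisj, hci, hcj⟩
      refine ⟨⟨hdisj, ?_⟩, hci⟩
      rw [hci, hcj]; omega
  rw [hTi]
  have hconst : ∀ p ∈ (univ.filter fun p : Finset (Fin n) × Finset (Fin n) =>
      Disjoint p.1 p.2 ∧ p.1.card = i ∧ p.2.card = d - lam * i),
      (q ^ m - q) ^ p.1.card * (q - 1) ^ p.2.card
        = (q ^ m - q) ^ i * (q - 1) ^ (d - lam * i) := by
    intro p hp
    rw [Finset.mem_filter] at hp
    rw [hp.2.2.1, hp.2.2.2]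
  rw [Finset.sum_congr rfl hconst, Finset.sum_const, card_disjoint_pairs, smul_eq_mul]
  ring
end

section
/- Singleton-type bound: for λ ≥ 1 and any code C ⊆ F_{q^m}^n (not necessarily linear) with |C| ≥ 2 and minimum λ-subfield distance d_λ, one has ⌊(d_λ − 1)/λ⌋ ≤ n − ⌈log_{q^m}(|C|)⌉. -/
open Finset
open scoped Classical

/-- The `λ`-subfield weight on `F_{q^m}^n`. -/
noncomputable def wtl {K : Type*} [Field K] (F : Subfield K) (lam : ℝ) {n : ℕ}
    (x : Fin n → K) : ℝ :=
  ∑ i, if x i = 0 then 0 else if x i ∈ F then 1 else lam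

/-- Singleton-type bound. For `λ ≥ 1` and any (possibly nonlinear) code
`C ⊆ F_{q^m}^n` with `|C| ≥ 2` and minimum `λ`-subfield distance `d_λ`,
`⌊(d_λ − 1)/λ⌋ ≤ n − ⌈log_{q^m} |C|⌉`. -/
theorem singleton_bound_lambda_subfield
    {q m : ℕ} (hq : ∃ p s : ℕ, p.Prime ∧ 0 < s ∧ q = p ^ s) (hm : 2 ≤ m)
    {K : Type*} [Field K] [Fintype K] (F : Subfield K)
    (hcardF : Fintype.card F = q) (hcardK : Fintype.card K = q ^ m)
    (lam : ℝ) (hlam : 1 ≤ lam) {n : ℕ}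
    (C : Finset (Fin n → K)) (hC : 2 ≤ C.card) (d : ℝ)
    (hd : IsLeast {w : ℝ | ∃ x ∈ C, ∃ y ∈ C, x ≠ y ∧ w = wtl F lam (x - y)} d) :
    (⌊(d - 1) / lam⌋ : ℤ) ≤ (n : ℤ) - ⌈Real.logb ((q : ℝ) ^ m) (C.card : ℝ)⌉ := by
  have hlam0 : (0:ℝ) < lam := lt_of_lt_of_le one_pos hlam
  -- q ≥ 2
  have hq2 : 2 ≤ q := by
    obtain ⟨p, s, hp, hs, rfl⟩ := hq
    calc 2 ≤ p := hp.two_le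
    _ = p ^ 1 := (pow_one p).symm
    _ ≤ p ^ s := Nat.pow_le_pow_right hp.pos hs
  -- weight bound: for z ≠ 0, wtl ≤ lam * #nonzero coords and 1 ≤ wtl
  have key : ∀ z : Fin n → K, wtl F lam z ≤ lam * ((univ.filter (fun i => z i ≠ 0)).card : ℝ) := by
    intro z
    have : wtl F lam z ≤ ∑ i ∈ univ.filter (fun i => z i ≠ 0), lam := by
      rw [wtl, ← Finset.sum_filter_add_sum_filter_not univ (fun i => z i ≠ 0)]
      have h1 : ∑ i ∈ univ.filter (fun i => ¬ z i ≠ 0),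
          (if z i = 0 then 0 else if z i ∈ F then 1 else lam) = 0 := by
        apply Finset.sum_eq_zero
        intro i hi
        simp only [Finset.mem_filter, not_not] at hi
        simp [hi.2]
      rw [h1, add_zero]
      apply Finset.sum_le_sum
      intro i hi
      simp only [Finset.mem_filter] at hi
      rw [if_neg hi.2]
      split <;> [exact hlam; exact le_refl _]
    simpa [mul_comm] using this
  have one_le : ∀ z : Fin n → K, z ≠ 0 → 1 ≤ wtl F lam z := by
    intro z hz
    obtain ⟨i, hi⟩ := Function.ne_iff.mp hz
    simp only [Pi.zero_apply] at hi
    rw [wtl]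
    have := Finset.single_le_sum (f := fun i => if z i = 0 then 0 else if z i ∈ F then 1 else lam)
      (fun j _ => by positivity) (Finset.mem_univ i)
    refine le_trans ?_ this
    show (1:ℝ) ≤ if z i = 0 then 0 else if z i ∈ F then 1 else lam
    rw [if_neg hi]
    split <;> [exact le_refl _; exact hlam]
  -- d ≥ 1
  obtain ⟨x, hx, y, hy, hxy, hdxy⟩ := hd.1
  have hd1 : 1 ≤ d := hdxy ▸ one_le _ (sub_ne_zero.mpr hxy)
  set k : ℤ := ⌊(d - 1) / lam⌋ with hk
  have hk0 : 0 ≤ k := Int.le_floor.mpr (by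
    simp only [Int.cast_zero]
    exact div_nonneg (by linarith) hlam0.le)
  -- for any distinct pair in C, k < hamming dist
  have pair : ∀ a ∈ C, ∀ b ∈ C, a ≠ b →
      k < ((univ.filter (fun i => a i ≠ b i)).card : ℤ) := by
    intro a ha b hb hab
    have hle : d ≤ wtl F lam (a - b) := hd.2 ⟨a, ha, b, hb, hab, rfl⟩
    have hfil : (univ.filter (fun i => (a - b) i ≠ 0)) = univ.filter (fun i => a i ≠ b i) := by
      apply Finset.filter_congr
      intro i _
      simp [sub_eq_zero]
    have h2 : d ≤ lam * ((univ.filter (fun i => a i ≠ b i)).card : ℝ) := by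
      calc d ≤ wtl F lam (a - b) := hle
      _ ≤ lam * ((univ.filter (fun i => (a - b) i ≠ 0)).card : ℝ) := key _
      _ = _ := by rw [hfil]
    set h : ℕ := (univ.filter (fun i => a i ≠ b i)).card
    have : (d - 1) / lam < (h : ℝ) := by
      rw [div_lt_iff₀ hlam0]
      nlinarith
    have h3 := lt_of_le_of_lt (Int.floor_le ((d - 1) / lam)) this
    exact_mod_cast h3
  -- k < n
  have hkn : k < (n : ℤ) := by
    refine lt_of_lt_of_le (pair x hx y hy hxy) ?_
    have := Finset.card_filter_le (univ : Finset (Fin n)) (fun i => x i ≠ y i)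
    simp only [Finset.card_univ, Fintype.card_fin] at this
    exact_mod_cast this
  set k0 : ℕ := k.toNat with hk0def
  have hkk0 : (k0 : ℤ) = k := Int.toNat_of_nonneg hk0
  have hk0n : k0 ≤ n := by omega
  -- choose S with card k0
  obtain ⟨S, hSsub, hScard⟩ := Finset.exists_subset_card_eq (s := (univ : Finset (Fin n))) (n := k0)
    (by simpa using hk0n)
  -- injection
  have hinj : Set.InjOn (fun a : Fin n → K => (fun i : {i // i ∉ S} => a i.1)) C := by
    intro a ha b hb hab
    by_contra hne
    have hsub : univ.filter (fun i => a i ≠ b i) ⊆ S := by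
      intro i hi
      simp only [Finset.mem_filter] at hi
      by_contra hiS
      exact hi.2 (congrFun hab ⟨i, hiS⟩)
    have := Finset.card_le_card hsub
    rw [hScard] at this
    have hp := pair a ha b hb hne
    omega
  have hcard : C.card ≤ (q ^ m) ^ (n - k0) := by
    have := Finset.card_le_card_of_injOn _ (fun a _ => Finset.mem_univ _) hinj
    refine le_trans this ?_
    rw [Finset.card_univ, Fintype.card_fun, hcardK]
    apply Nat.pow_le_pow_right (by positivity)
    rw [Fintype.card_subtype]
    have : (univ.filter (fun i => i ∉ S)) = Sᶜ := by
      ext i; simp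
    rw [this, Finset.card_compl, hScard]
    simp
  -- logb bound
  have hB : (1:ℝ) < (q:ℝ) ^ m := by
    apply one_lt_pow₀
    · exact_mod_cast hq2
    · omega
  have hlog : Real.logb ((q:ℝ)^m) (C.card : ℝ) ≤ ((n - k0 : ℕ) : ℝ) := by
    have hCpos : (0:ℝ) < (C.card : ℝ) := by exact_mod_cast lt_of_lt_of_le (by norm_num) hC
    calc Real.logb ((q:ℝ)^m) (C.card : ℝ)
        ≤ Real.logb ((q:ℝ)^m) (((q:ℝ)^m) ^ (n - k0)) := by
          apply Real.logb_le_logb_of_le hB hCpos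
          calc (C.card : ℝ) ≤ (((q ^ m) ^ (n - k0) : ℕ) : ℝ) := by exact_mod_cast hcard
          _ = ((q:ℝ)^m) ^ (n - k0) := by push_cast; ring
      _ = ((n - k0 : ℕ) : ℝ) := by
          rw [Real.logb_pow, Real.logb_self_eq_one hB, mul_one]
  have hceil : ⌈Real.logb ((q:ℝ)^m) (C.card : ℝ)⌉ ≤ ((n - k0 : ℕ) : ℤ) := by
    apply Int.ceil_le.mpr
    exact_mod_cast hlog
  have : ((n - k0 : ℕ) : ℤ) = (n : ℤ) - k0 := by omega
  omega
end

section
/- For λ ≥ 1 and a linear code C ⊆ F_{q^m}^n of dimension k ≥ 1 over F_{q^m}, the minimum λ-subfield distance satisfies d_λ(C) ≤ λ(n−k) + 1. -/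
open Finset
open scoped Classical

/-- For `λ ≥ 1` and an `F_{q^m}`-linear code `C ⊆ F_{q^m}^n` of dimension
`k ≥ 1`, the minimum `λ`-subfield distance satisfies `d_λ(C) ≤ λ(n−k) + 1`, i.e. `C`
contains a nonzero codeword of `λ`-subfield weight at most `λ(n−k) + 1`. -/
theorem singleton_bound_linear_lambda_subfield
    {q m : ℕ} (hq : ∃ p s : ℕ, p.Prime ∧ 0 < s ∧ q = p ^ s) (hm : 2 ≤ m)
    {K : Type*} [Field K] [Fintype K] (F : Subfield K)
    (hcardF : Fintype.card F = q) (hcardK : Fintype.card K = q ^ m)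
    (lam : ℝ) (hlam : 1 ≤ lam) {n k : ℕ}
    (C : Submodule K (Fin n → K)) (hk : Module.finrank K C = k) (hk1 : 1 ≤ k) :
    ∃ c ∈ C, c ≠ 0 ∧ wtl F lam c ≤ lam * ((n : ℝ) - (k : ℝ)) + 1 := by
  classical
  have hlam0 : (0:ℝ) ≤ lam := le_trans zero_le_one hlam
  have hkn : k ≤ n := by
    have h := Submodule.finrank_le C
    rw [hk] at h
    simpa using h
  -- pick a set of k-1 coordinates
  obtain ⟨S, hSsub, hScard⟩ := Finset.exists_subset_card_eq (s := (Finset.univ : Finset (Fin n)))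
    (n := k - 1) (by simpa using Nat.le_trans (Nat.sub_le k 1) hkn)
  -- projection to coordinates in S
  let f : C →ₗ[K] (S → K) :=
    (LinearMap.funLeft K K (Subtype.val : S → Fin n)).comp C.subtype
  have hnotinj : ¬ Function.Injective f := by
    intro hinj
    have h1 := LinearMap.finrank_le_finrank_of_injective hinj
    have h2 : Module.finrank K (S → K) = k - 1 := by
      simp [Module.finrank_pi, hScard]
    rw [hk, h2] at h1
    omega
  obtain ⟨x, hx0, hxker⟩ : ∃ x : C, x ≠ 0 ∧ f x = 0 := by
    by_contra h
    push_neg at h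
    exact hnotinj ((LinearMap.ker_eq_bot (M := C)).mp
      ((Submodule.eq_bot_iff _).mpr (fun x hx => by
        by_contra hx0
        exact (h x hx0) hx)))
  set c : Fin n → K := (x : Fin n → K) with hc
  have hcC : c ∈ C := x.2
  have hczS : ∀ j ∈ S, c j = 0 := by
    intro j hj
    have := congrFun hxker ⟨j, hj⟩
    simpa [f, LinearMap.funLeft] using this
  have hcne : c ≠ 0 := by
    intro h
    apply hx0
    exact Subtype.ext h
  obtain ⟨i, hi⟩ : ∃ i, c i ≠ 0 := by
    by_contra h
    push_neg at h
    exact hcne (funext h)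
  have hiS : i ∉ S := fun h => hi (hczS i h)
  -- scale so coordinate i equals 1
  set c' : Fin n → K := (c i)⁻¹ • c with hc'
  have hc'C : c' ∈ C := C.smul_mem _ hcC
  have hc'i : c' i = 1 := by
    simp [hc', inv_mul_cancel₀ hi]
  have hc'ne : c' ≠ 0 := by
    intro h
    have := congrFun h i
    rw [hc'i] at this
    exact one_ne_zero this
  have hc'zS : ∀ j ∈ S, c' j = 0 := by
    intro j hj
    simp [hc', hczS j hj]
  refine ⟨c', hc'C, hc'ne, ?_⟩
  -- bound the weight
  set T : Finset (Fin n) := insert i S with hT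
  have hTcard : T.card = k := by
    rw [hT, Finset.card_insert_of_notMem hiS, hScard]
    omega
  have hsplit : wtl F lam c' =
      (∑ j ∈ T, if c' j = 0 then 0 else if c' j ∈ F then 1 else lam) +
      ∑ j ∈ Tᶜ, if c' j = 0 then 0 else if c' j ∈ F then 1 else lam := by
    rw [wtl, ← Finset.sum_add_sum_compl T]
  rw [hsplit]
  have h1 : (∑ j ∈ T, if c' j = 0 then 0 else if c' j ∈ F then 1 else lam) = 1 := by
    rw [hT, Finset.sum_insert hiS]
    have : (∑ j ∈ S, if c' j = 0 then 0 else if c' j ∈ F then 1 else lam) = 0 :=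
      Finset.sum_eq_zero (fun j hj => by simp [hc'zS j hj])
    rw [this, hc'i]
    simp [F.one_mem]
  have h2 : (∑ j ∈ Tᶜ, if c' j = 0 then 0 else if c' j ∈ F then 1 else lam)
      ≤ lam * ((n:ℝ) - k) := by
    have hb : ∀ j ∈ Tᶜ, (if c' j = 0 then (0:ℝ) else if c' j ∈ F then 1 else lam) ≤ lam := by
      intro j _
      split
      · exact hlam0
      · split
        · exact hlam
        · exact le_rfl
    calc (∑ j ∈ Tᶜ, if c' j = 0 then (0:ℝ) else if c' j ∈ F then 1 else lam)
        ≤ ∑ _j ∈ Tᶜ, lam := Finset.sum_le_sum hb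
      _ = (Tᶜ.card : ℝ) * lam := by rw [Finset.sum_const, nsmul_eq_mul]
      _ = lam * ((n:ℝ) - k) := by
          rw [Finset.card_compl, hTcard, Fintype.card_fin, Nat.cast_sub hkn]
          ring
  linarith
end

section
/- Plotkin-type bound for linear codes: if C ⊆ F_{q^m}^n is a linear code with |C| ≥ 2 and minimum λ-subfield distance d_λ(C), then d_λ(C) ≤ (|C|/(|C|−1)) · n · (λ − (λ−1)q^{1−m} − q^{−m}). -/
open Finset
open scoped Classical

lemma sum_comp_surj_addhom {A B : Type*} [AddGroup A] [AddCommGroup B] [Fintype A] [Fintype B]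
    (φ : A →+ B) (hφ : Function.Surjective φ) (g : B → ℝ) :
    ∑ a : A, g (φ a) = (Nat.card φ.ker : ℝ) * ∑ b : B, g b := by
  classical
  have h1 : ∑ b : B, ∑ a ∈ univ.filter (fun a => φ a = b), g (φ a) = ∑ a : A, g (φ a) :=
    Finset.sum_fiberwise_of_maps_to (fun a _ => mem_univ _) _
  rw [← h1]
  rw [Finset.mul_sum]
  refine Finset.sum_congr rfl fun b _ => ?_
  have hcard : (univ.filter (fun a => φ a = b)).card = Nat.card φ.ker := by
    have e : (φ ⁻¹' {b}) ≃ φ.ker := AddMonoidHom.fiberEquivKerOfSurjective hφ b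
    rw [← Fintype.card_subtype]
    rw [← Nat.card_eq_fintype_card]
    exact Nat.card_congr ((Equiv.subtypeEquivRight (fun a => by simp [Set.mem_preimage])).symm.trans e)
  calc ∑ a ∈ univ.filter (fun a => φ a = b), g (φ a)
      = ∑ a ∈ univ.filter (fun a => φ a = b), g b :=
        Finset.sum_congr rfl (fun a ha => by rw [(Finset.mem_filter.1 ha).2])
    _ = (univ.filter (fun a => φ a = b)).card • g b := by rw [Finset.sum_const]
    _ = (Nat.card φ.ker : ℝ) * g b := by rw [hcard, nsmul_eq_mul]

/-- Plotkin-type bound for linear codes. If `C ⊆ F_{q^m}^n` is linear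
with `|C| ≥ 2` and minimum `λ`-subfield distance `d_λ(C)`, then
`d_λ(C) ≤ (|C|/(|C|−1)) · n · (λ − (λ−1)q^{1−m} − q^{−m})`. -/
theorem plotkin_bound_linear_lambda_subfield
    {q m : ℕ} (hq : ∃ p s : ℕ, p.Prime ∧ 0 < s ∧ q = p ^ s) (hm : 2 ≤ m)
    {K : Type*} [Field K] [Fintype K] (F : Subfield K)
    (hcardF : Fintype.card F = q) (hcardK : Fintype.card K = q ^ m)
    (lam : ℝ) (hlam : 1 ≤ lam) {n : ℕ}
    (C : Submodule K (Fin n → K)) (hC : 2 ≤ Nat.card C) (d : ℝ)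
    (hd : IsLeast {w : ℝ | ∃ c ∈ C, c ≠ 0 ∧ w = wtl F lam c} d) :
    d ≤ ((Nat.card C : ℝ) / ((Nat.card C : ℝ) - 1)) * (n : ℝ) *
        (lam - (lam - 1) * (q : ℝ) ^ ((1 : ℤ) - (m : ℤ)) - (q : ℝ) ^ (-(m : ℤ))) := by
  classical
  obtain ⟨p, s, hp, hs, rfl⟩ := hq
  set q := p ^ s with hqdef
  have hq2 : 2 ≤ q := Nat.one_lt_pow (by omega) hp.two_le
  have hq0R : (0:ℝ) < (q:ℝ) := by positivity
  have hqne : (q:ℝ) ≠ 0 := ne_of_gt hq0R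
  have hqmle : q ≤ q ^ m := Nat.le_self_pow (by omega) q
  have hqm0 : (0:ℝ) < (q:ℝ) ^ m := by positivity
  set N := Nat.card C with hN
  have hNf : Nat.card C = Fintype.card C := Nat.card_eq_fintype_card
  -- the single-letter weight function
  set f : K → ℝ := fun a => if a = 0 then 0 else if a ∈ F then 1 else lam with hf
  have hf0 : ∀ a : K, 0 ≤ f a := by
    intro a; simp only [hf]
    split_ifs <;> [norm_num; norm_num; linarith]
  set T : ℝ := ((q:ℝ) - 1) + lam * ((q:ℝ)^m - (q:ℝ)) with hT
  have hT0 : 0 ≤ T := by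
    have : (q:ℝ) ≤ (q:ℝ)^m := by exact_mod_cast hqmle
    have h1 : (1:ℝ) ≤ (q:ℝ) := by exact_mod_cast (by omega : 1 ≤ q)
    nlinarith
  -- total sum of f over K
  have hsumK : ∑ a : K, f a = T := by
    have hsplit : ∀ a : K, f a = (if a ∈ F then (1:ℝ) else lam) - (if a = 0 then 1 else 0) := by
      intro a
      by_cases h : a = 0
      · simp [hf, h, F.zero_mem]
      · simp [hf, h]
    rw [Finset.sum_congr rfl (fun a _ => hsplit a), Finset.sum_sub_distrib]
    have h1 : ∑ a : K, (if a ∈ F then (1:ℝ) else lam)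
        = (univ.filter (fun a : K => a ∈ F)).card * 1
          + (univ.filter (fun a : K => ¬ a ∈ F)).card * lam := by
      rw [Finset.sum_ite, Finset.sum_const, Finset.sum_const, nsmul_eq_mul, nsmul_eq_mul]
    have hFcard : (univ.filter (fun a : K => a ∈ F)).card = q := by
      rw [← Fintype.card_subtype]; exact hcardF
    have hnFcard : (univ.filter (fun a : K => ¬ a ∈ F)).card = q ^ m - q := by
      have := Finset.card_filter_add_card_filter_not
        (s := (univ : Finset K)) (p := fun a : K => a ∈ F)
      rw [Finset.card_univ, hcardK] at this
      omega
    have h2 : ∑ a : K, (if a = 0 then (1:ℝ) else 0) = 1 := by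
      rw [Finset.sum_ite_eq' univ (0:K) (fun _ => (1:ℝ))]
      simp
    rw [h1, h2, hFcard, hnFcard, hT]
    have : ((q ^ m - q : ℕ) : ℝ) = (q:ℝ)^m - (q:ℝ) := by
      rw [Nat.cast_sub hqmle]; push_cast; ring
    rw [this]; ring
  -- per-coordinate bound
  have key : ∀ i : Fin n, ∑ c : C, f ((c : Fin n → K) i) ≤ (N : ℝ) * (T / (q:ℝ)^m) := by
    intro i
    set φ : C →+ K := ((LinearMap.proj i).comp C.subtype).toAddMonoidHom with hφdef
    by_cases hz : ∀ c : C, φ c = 0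
    · have : ∑ c : C, f ((c : Fin n → K) i) = 0 := by
        refine Finset.sum_eq_zero fun c _ => ?_
        have : (c : Fin n → K) i = 0 := hz c
        simp [hf, this]
      rw [this]
      have : 0 ≤ (N : ℝ) * (T / (q:ℝ)^m) := by positivity
      linarith
    · push_neg at hz
      obtain ⟨c₀, hc₀⟩ := hz
      have hsurj : Function.Surjective φ := by
        intro b
        refine ⟨(b * (φ c₀)⁻¹) • c₀, ?_⟩
        have : φ ((b * (φ c₀)⁻¹) • c₀) = (b * (φ c₀)⁻¹) * φ c₀ := by
          show (LinearMap.proj i ∘ₗ C.subtype) ((b * (φ c₀)⁻¹) • c₀)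
              = (b * (φ c₀)⁻¹) * (LinearMap.proj i ∘ₗ C.subtype) c₀
          rw [map_smul, smul_eq_mul]
        rw [this, mul_assoc, inv_mul_cancel₀ hc₀, mul_one]
      have hmain := sum_comp_surj_addhom φ hsurj f
      have hcnt := sum_comp_surj_addhom φ hsurj (fun _ => (1:ℝ))
      simp only [Finset.sum_const, Finset.card_univ, nsmul_eq_mul, mul_one] at hcnt
      rw [hcardK, ← hNf] at hcnt
      -- hcnt : (N:ℝ) = card ker * (q^m)
      have hNcast : (N : ℝ) = (Nat.card φ.ker : ℝ) * ((q:ℝ)^m) := by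
        push_cast at hcnt ⊢
        exact_mod_cast hcnt
      have : ∑ c : C, f ((c : Fin n → K) i) = (Nat.card φ.ker : ℝ) * T := by
        rw [← hsumK]
        convert hmain using 2
        rfl
      rw [this, hNcast]
      have heq : (Nat.card φ.ker : ℝ) * (q:ℝ)^m * (T / (q:ℝ)^m)
          = (Nat.card φ.ker : ℝ) * T := by
        rw [mul_assoc]
        congr 1
        rw [mul_comm, div_mul_cancel₀ _ (ne_of_gt hqm0)]
      rw [heq]
  -- sum of weights over C, upper bound
  have hupper : ∑ c : C, wtl F lam (c : Fin n → K) ≤ (n : ℝ) * ((N : ℝ) * (T / (q:ℝ)^m)) := by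
    have hswap : ∑ c : C, wtl F lam (c : Fin n → K)
        = ∑ i : Fin n, ∑ c : C, f ((c : Fin n → K) i) := by
      rw [Finset.sum_comm]
      exact Finset.sum_congr rfl fun c _ => rfl
    rw [hswap]
    calc ∑ i : Fin n, ∑ c : C, f ((c : Fin n → K) i)
        ≤ ∑ i : Fin n, (N : ℝ) * (T / (q:ℝ)^m) := Finset.sum_le_sum fun i _ => key i
      _ = (n : ℝ) * ((N : ℝ) * (T / (q:ℝ)^m)) := by
          rw [Finset.sum_const, Finset.card_univ, Fintype.card_fin, nsmul_eq_mul]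
  -- lower bound
  have hlower : ((N : ℝ) - 1) * d ≤ ∑ c : C, wtl F lam (c : Fin n → K) := by
    have h0 : wtl F lam ((0 : C) : Fin n → K) = 0 := by
      simp [wtl]
    have hsplit : ∑ c : C, wtl F lam (c : Fin n → K)
        = wtl F lam ((0 : C) : Fin n → K)
          + ∑ c ∈ univ.erase (0 : C), wtl F lam (c : Fin n → K) := by
      exact (Finset.add_sum_erase _ _ (mem_univ _)).symm
    have hge : ∀ c ∈ univ.erase (0 : C), d ≤ wtl F lam (c : Fin n → K) := by
      intro c hc
      have hc0 : c ≠ 0 := (Finset.mem_erase.1 hc).1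
      have hc0' : (c : Fin n → K) ≠ 0 := by
        intro h
        exact hc0 (Subtype.ext h)
      exact hd.2 ⟨(c : Fin n → K), c.2, hc0', rfl⟩
    have hcard : (univ.erase (0 : C)).card = N - 1 := by
      rw [Finset.card_erase_of_mem (mem_univ _), Finset.card_univ, ← hNf]
    have := Finset.card_nsmul_le_sum (univ.erase (0 : C)) _ d hge
    rw [hcard, nsmul_eq_mul] at this
    have hcast : ((N - 1 : ℕ) : ℝ) = (N : ℝ) - 1 := by
      have : 1 ≤ N := by omega
      push_cast [Nat.cast_sub this]; ring
    rw [hcast] at this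
    rw [hsplit, h0, zero_add]
    exact this
  -- combine
  have hN1 : (0:ℝ) < (N : ℝ) - 1 := by
    have : (2:ℝ) ≤ (N:ℝ) := by exact_mod_cast hC
    linarith
  have hDeq : T / (q:ℝ)^m
      = lam - (lam - 1) * (q : ℝ) ^ ((1 : ℤ) - (m : ℤ)) - (q : ℝ) ^ (-(m : ℤ)) := by
    have h1 : (q : ℝ) ^ ((1 : ℤ) - (m : ℤ)) = (q:ℝ) / (q:ℝ)^m := by
      rw [zpow_sub₀ hqne, zpow_one, zpow_natCast]
    have h2 : (q : ℝ) ^ (-(m : ℤ)) = ((q:ℝ)^m)⁻¹ := by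
      rw [zpow_neg, zpow_natCast]
    rw [h1, h2, hT]
    field_simp
    ring
  rw [← hDeq]
  have hrw : ((N : ℝ) / ((N : ℝ) - 1)) * (n : ℝ) * (T / (q:ℝ)^m)
      = ((N : ℝ) * (n : ℝ) * (T / (q:ℝ)^m)) / ((N : ℝ) - 1) := by ring
  rw [hrw, le_div_iff₀ hN1]
  calc d * ((N:ℝ) - 1) = ((N:ℝ) - 1) * d := by ring
    _ ≤ (n : ℝ) * ((N : ℝ) * (T / (q:ℝ)^m)) := le_trans hlower hupper
    _ = (N:ℝ) * (n:ℝ) * (T / (q:ℝ)^m) := by ring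
end

section
/- MRD codes are optimal in the λ-subfield metric: if C ⊆ F_{q^m}^n is a linear code of dimension k whose minimum rank distance equals n−k+1 (MRD), then for λ ≥ 1 its minimum λ-subfield distance d_λ satisfies λ(n−k) + 1 ≤ d_λ ≤ λ(n−k) + 1, hence d_λ(C) = λ(n−k) + 1, and C achieves the Singleton-type bound ⌊(d_λ−1)/λ⌋ = n−k. -/
open Finset
open scoped Classical

/-- The rank weight of a vector: the `F_q`-dimension of the span of its entries. -/
noncomputable def wtR {K : Type*} [Field K] (F : Subfield K) {n : ℕ} (v : Fin n → K) : ℕ :=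
  Module.finrank F (Submodule.span F (Set.range v))

lemma wtl_lower {K : Type*} [Field K] [Fintype K] (F : Subfield K)
    {lam : ℝ} (hlam : 1 ≤ lam) {n : ℕ} {v : Fin n → K} (hv : v ≠ 0) :
    lam * ((wtR F v : ℝ) - 1) + 1 ≤ wtl F lam v := by
  set A : Finset (Fin n) := univ.filter (fun i => v i ≠ 0 ∧ v i ∈ F) with hA
  set B : Finset (Fin n) := univ.filter (fun i => v i ≠ 0 ∧ v i ∉ F) with hB
  have hlam0 : (0:ℝ) ≤ lam := le_trans zero_le_one hlam
  have hwtl : wtl F lam v = (A.card : ℝ) + lam * B.card := by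
    unfold wtl
    have : ∀ i, (if v i = 0 then (0:ℝ) else if v i ∈ F then 1 else lam)
        = (if i ∈ A then (1:ℝ) else 0) + (if i ∈ B then lam else 0) := by
      intro i
      by_cases h0 : v i = 0 <;> by_cases hF : v i ∈ F <;>
        simp [hA, hB, h0, hF]
    rw [Finset.sum_congr rfl (fun i _ => this i), Finset.sum_add_distrib]
    simp [Finset.sum_ite_mem, mul_comm]
  -- span bound
  have hspanB : ∀ i ∈ B, v i ∈ Submodule.span F (↑(B.image v) : Set K) := by
    intro i hi
    exact Submodule.subset_span (by simpa using Finset.mem_image_of_mem v hi)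
  by_cases hAe : A = ∅
  · -- all nonzero entries outside F
    have hBne : B.Nonempty := by
      obtain ⟨i, hi⟩ := Function.ne_iff.mp hv
      refine ⟨i, ?_⟩
      have hiF : v i ∉ F := by
        intro hF
        have : i ∈ A := by simp [hA, hi, hF]; simpa using hi
        simp [hAe] at this
      simp [hB]; exact ⟨by simpa using hi, hiF⟩
    have hle : Submodule.span F (Set.range v) ≤ Submodule.span F (↑(B.image v) : Set K) := by
      rw [Submodule.span_le]
      rintro x ⟨i, rfl⟩
      by_cases h0 : v i = 0
      · rw [h0]; exact Submodule.zero_mem _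
      · have hiF : v i ∉ F := by
          intro hF
          have : i ∈ A := by simp [hA, h0, hF]
          simp [hAe] at this
        exact hspanB i (by simp [hB, h0, hiF])
    have hrk : wtR F v ≤ B.card := by
      calc wtR F v ≤ Module.finrank F (Submodule.span F (↑(B.image v) : Set K)) :=
            Submodule.finrank_mono hle
        _ ≤ (B.image v).card := finrank_span_finset_le_card _
        _ ≤ B.card := Finset.card_image_le
    have hrkR : (wtR F v : ℝ) ≤ B.card := by exact_mod_cast hrk
    have hB1 : (1:ℝ) ≤ B.card := by exact_mod_cast hBne.card_pos
    rw [hwtl, hAe]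
    simp only [Finset.card_empty, Nat.cast_zero, zero_add]
    nlinarith
  · have hAne : A.Nonempty := Finset.nonempty_iff_ne_empty.mpr hAe
    have hle : Submodule.span F (Set.range v)
        ≤ Submodule.span F ((↑(B.image v) : Set K) ∪ {1}) := by
      rw [Submodule.span_le]
      rintro x ⟨i, rfl⟩
      by_cases h0 : v i = 0
      · rw [h0]; exact Submodule.zero_mem _
      · by_cases hF : v i ∈ F
        · have h1 : (1:K) ∈ Submodule.span F ((↑(B.image v) : Set K) ∪ {1}) :=
            Submodule.subset_span (by simp)
          have := Submodule.smul_mem _ (⟨v i, hF⟩ : F) h1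
          simpa [Subfield.smul_def] using this
        · have : v i ∈ Submodule.span F (↑(B.image v) : Set K) :=
            hspanB i (by simp [hB, h0, hF])
          exact Submodule.span_mono Set.subset_union_left this
    have hset : ((↑(B.image v) : Set K) ∪ {1}) = (↑(insert (1:K) (B.image v)) : Set K) := by
      rw [Finset.coe_insert, Set.insert_eq, Set.union_comm]
    have hrk : wtR F v ≤ B.card + 1 := by
      calc wtR F v ≤ Module.finrank F (Submodule.span F ((↑(B.image v) : Set K) ∪ {1})) :=
            Submodule.finrank_mono hle
        _ ≤ (insert (1:K) (B.image v)).card := by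
            rw [hset]; exact finrank_span_finset_le_card _
        _ ≤ (B.image v).card + 1 := Finset.card_insert_le _ _
        _ ≤ B.card + 1 := by have := Finset.card_image_le (s := B) (f := v); omega
    have hrkR : (wtR F v : ℝ) ≤ (B.card : ℝ) + 1 := by exact_mod_cast hrk
    have hA1 : (1:ℝ) ≤ A.card := by exact_mod_cast hAne.card_pos
    rw [hwtl]
    nlinarith

/-- MRD codes are maximum `λ`-subfield distance codes. If `C` is an
`F_{q^m}`-linear code of dimension `k` whose minimum rank distance equals `n−k+1`,
then for `λ ≥ 1` its minimum `λ`-subfield distance `d_λ` equals `λ(n−k) + 1` and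
`C` achieves the Singleton-type bound `⌊(d_λ−1)/λ⌋ = n−k`. -/
theorem MRD_is_MlambdaD
    {q m : ℕ} (hq : ∃ p s : ℕ, p.Prime ∧ 0 < s ∧ q = p ^ s) (hm : 2 ≤ m)
    {K : Type*} [Field K] [Fintype K] (F : Subfield K)
    (hcardF : Fintype.card F = q) (hcardK : Fintype.card K = q ^ m)
    (lam : ℝ) (hlam : 1 ≤ lam) {n k : ℕ}
    (C : Submodule K (Fin n → K)) (hk : Module.finrank K C = k)
    (hk1 : 1 ≤ k) (hkn : k ≤ n)
    (hMRD : IsLeast {r : ℕ | ∃ c ∈ C, c ≠ 0 ∧ r = wtR F c} (n - k + 1))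
    (dl : ℝ) (hdl : IsLeast {w : ℝ | ∃ c ∈ C, c ≠ 0 ∧ w = wtl F lam c} dl) :
    dl = lam * ((n : ℝ) - (k : ℝ)) + 1 ∧ (⌊(dl - 1) / lam⌋ : ℤ) = (n : ℤ) - (k : ℤ) := by
  have hlam0 : (0:ℝ) < lam := lt_of_lt_of_le zero_lt_one hlam
  -- Lower bound on dl
  have hlow : lam * ((n : ℝ) - (k : ℝ)) + 1 ≤ dl := by
    obtain ⟨c0, hc0C, hc0ne, hdleq⟩ := hdl.1
    have hrk : n - k + 1 ≤ wtR F c0 := hMRD.2 ⟨c0, hc0C, hc0ne, rfl⟩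
    have hrkR : (n : ℝ) - (k : ℝ) + 1 ≤ (wtR F c0 : ℝ) := by
      have : ((n - k + 1 : ℕ) : ℝ) ≤ (wtR F c0 : ℝ) := by exact_mod_cast hrk
      rw [Nat.cast_add, Nat.cast_sub hkn] at this
      simpa using this
    have := wtl_lower F hlam hc0ne
    rw [← hdleq] at this
    nlinarith
  -- Upper bound: construct a codeword
  obtain ⟨T, -, hTcard⟩ := Finset.exists_subset_card_eq (s := (univ : Finset (Fin n))) (n := k - 1)
    (by simp; omega)
  have : FiniteDimensional K C := inferInstance
  let L : C →ₗ[K] (T → K) :=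
    { toFun := fun c i => c.1 i
      map_add' := fun a b => rfl
      map_smul' := fun a b => rfl }
  have hker : LinearMap.ker L ≠ ⊥ := by
    intro hbot
    have h1 := LinearMap.finrank_range_add_finrank_ker L
    have h2 : Module.finrank K (LinearMap.range L) ≤ k - 1 := by
      have := Submodule.finrank_le (LinearMap.range L)
      rw [Module.finrank_pi, Fintype.card_coe, hTcard] at this
      exact this
    rw [hbot, finrank_bot, hk] at h1
    omega
  obtain ⟨x, hxker, hxne⟩ := Submodule.exists_mem_ne_zero_of_ne_bot hker
  have hxT : ∀ i ∈ T, (x : Fin n → K) i = 0 := by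
    intro i hi
    have : L x = 0 := hxker
    exact congrFun this ⟨i, hi⟩
  have hx1ne : (x : Fin n → K) ≠ 0 := by
    intro h
    exact hxne (Subtype.ext h)
  obtain ⟨j, hj⟩ := Function.ne_iff.mp hx1ne
  have hj' : (x : Fin n → K) j ≠ 0 := by simpa using hj
  set c : Fin n → K := ((x : Fin n → K) j)⁻¹ • (x : Fin n → K) with hc
  have hcC : c ∈ C := C.smul_mem _ x.2
  have hcj : c j = 1 := by simp [hc, inv_mul_cancel₀ hj']
  have hcne : c ≠ 0 := by
    intro h
    have := congrFun h j
    rw [hcj] at this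
    exact one_ne_zero this
  have hcT : ∀ i ∈ T, c i = 0 := by
    intro i hi; simp [hc, hxT i hi]
  have hjT : j ∉ T := by
    intro hjmem
    exact hj' (hxT j hjmem)
  -- bound wtl of c
  have hup : wtl F lam c ≤ lam * ((n : ℝ) - (k : ℝ)) + 1 := by
    unfold wtl
    rw [← Finset.sum_erase_add _ _ (Finset.mem_univ j)]
    have hterm : (if c j = 0 then (0:ℝ) else if c j ∈ F then 1 else lam) = 1 := by
      simp [hcj, F.one_mem]
    rw [hterm]
    have hbound : ∑ i ∈ univ.erase j, (if c i = 0 then (0:ℝ) else if c i ∈ F then 1 else lam)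
        ≤ ∑ i ∈ univ.erase j, (if i ∈ T then (0:ℝ) else lam) := by
      apply Finset.sum_le_sum
      intro i _
      by_cases hiT : i ∈ T
      · simp [hiT, hcT i hiT]
      · simp only [hiT, if_neg]
        by_cases h0 : c i = 0
        · simp [h0]; linarith
        · by_cases hF : c i ∈ F <;> simp [h0, hF] <;> linarith
    have hTsub : T ⊆ univ.erase j := by
      intro i hi
      exact Finset.mem_erase.mpr ⟨fun h => hjT (h ▸ hi), Finset.mem_univ i⟩
    have hsum2 : ∑ i ∈ univ.erase j, (if i ∈ T then (0:ℝ) else lam)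
        = lam * ((univ.erase j).card - T.card : ℕ) := by
      rw [Finset.sum_ite, Finset.sum_const, Finset.sum_const]
      have : (univ.erase j).filter (fun i => i ∉ T) = univ.erase j \ T := by
        ext i; simp [Finset.mem_sdiff]
      rw [this, Finset.card_sdiff_of_subset hTsub]
      simp [mul_comm]
    have hcard : ((univ.erase j).card - T.card : ℕ) = n - k := by
      rw [Finset.card_erase_of_mem (Finset.mem_univ j), Finset.card_univ, Fintype.card_fin,
        hTcard]
      omega
    rw [hsum2, hcard] at hbound
    have : ((n - k : ℕ) : ℝ) = (n : ℝ) - (k : ℝ) := by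
      rw [Nat.cast_sub hkn]
    rw [this] at hbound
    linarith
  have hdlle : dl ≤ lam * ((n : ℝ) - (k : ℝ)) + 1 :=
    le_trans (hdl.2 ⟨c, hcC, hcne, rfl⟩) hup
  have hdleq : dl = lam * ((n : ℝ) - (k : ℝ)) + 1 := le_antisymm hdlle hlow
  refine ⟨hdleq, ?_⟩
  rw [hdleq]
  have : (lam * ((n : ℝ) - (k : ℝ)) + 1 - 1) / lam = (n : ℝ) - (k : ℝ) := by
    field_simp
    ring
  rw [this]
  rw [show ((n : ℝ) - (k : ℝ)) = (((n : ℤ) - (k : ℤ) : ℤ) : ℝ) by push_cast; ring]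
  exact Int.floor_intCast _
end

section
/- Random linear codes achieve the Gilbert–Varshamov bound with high probability: let g(d) = log_{q^m}(|B_{d,λ}|) and ε > 0, and let C ⊆ F_{q^m}^n be the row span of a uniformly random k×n matrix over F_{q^m} with k = ⌈(1 − g(d)/n − ε)n⌉. Then the probability that C contains a nonzero vector of λ-subfield weight less than d is at most q^{m(1−εn)}. -/
open Finset
open scoped Classical

lemma sum_ne_eq_sub {M : Type*} [AddCommGroup M] {k : ℕ} (j : Fin k) (H : Fin k → M) :
    ∑ i : {i : Fin k // i ≠ j}, H i = ∑ i, H i - H j := by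
  rw [← Finset.sum_subtype (univ.erase j) (fun i => by simp) H,
    Finset.sum_erase_eq_sub (mem_univ j)]

noncomputable def fiberEquiv {K : Type*} [Field K] {k n : ℕ} (c : Fin k → K) (j : Fin k)
    (hcj : c j ≠ 0) (v : Fin n → K) :
    {G : Matrix (Fin k) (Fin n) K // ∑ i, c i • G i = v} ≃
      ({i : Fin k // i ≠ j} → Fin n → K) where
  toFun G := fun i => G.1 i
  invFun f := ⟨fun i => if h : i = j
      then (c j)⁻¹ • (v - ∑ i' : {i : Fin k // i ≠ j}, c i' • f i')
      else f ⟨i, h⟩, by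
    set T := ∑ i' : {i : Fin k // i ≠ j}, c i' • f i' with hT
    set G : Matrix (Fin k) (Fin n) K := fun i => if h : i = j
      then (c j)⁻¹ • (v - T) else f ⟨i, h⟩ with hG
    have h1 : ∑ i' : {i : Fin k // i ≠ j}, c i' • G i' = T := by
      rw [hT]
      refine Finset.sum_congr rfl fun i _ => ?_
      rw [hG]
      simp only [dif_neg i.2]
    have h2 : ∑ i, c i • G i = c j • G j + T := by
      rw [← h1, sum_ne_eq_sub j (fun i => c i • G i)]
      abel
    rw [h2, hG]
    simp only [dif_pos rfl, dite_true]
    rw [smul_smul, mul_inv_cancel₀ hcj, one_smul, sub_add_cancel]⟩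
  left_inv G := by
    ext i l
    dsimp only
    by_cases h : i = j
    · rw [h, dif_pos rfl]
      have hT : ∑ i' : {i : Fin k // i ≠ j}, c i' • G.1 i' = v - c j • G.1 j := by
        rw [sum_ne_eq_sub j (fun i => c i • G.1 i), G.2]
      rw [hT, sub_sub_cancel, smul_smul, inv_mul_cancel₀ hcj, one_smul]
    · rw [dif_neg h]
  right_inv f := by
    ext i l
    dsimp only
    rw [dif_neg i.2]

lemma fiber_card_s19 {K : Type*} [Field K] [Fintype K] {k n : ℕ} (c : Fin k → K)
    (hc : c ≠ 0) (v : Fin n → K) :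
    (univ.filter fun G : Matrix (Fin k) (Fin n) K => ∑ i, c i • G i = v).card
      = (Fintype.card K ^ n) ^ (k - 1) := by
  obtain ⟨j, hcj⟩ : ∃ j, c j ≠ 0 := by
    by_contra h
    push_neg at h
    exact hc (funext h)
  rw [← Fintype.card_subtype, Fintype.card_congr (fiberEquiv c j hcj v),
    Fintype.card_fun, Fintype.card_fun]
  simp only [Fintype.card_fin]
  congr 1
  rw [Fintype.card_subtype_compl (p := (· = j)), Fintype.card_subtype_eq, Fintype.card_fin]

/-- Random linear codes achieve the Gilbert–Varshamov bound with high
probability. Let `g(d) = log_{q^m}(|B_{d,λ}|)` and `ε > 0`, and let `C` be the row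
span of a uniformly random `k × n` matrix over `F_{q^m}` with
`k = ⌈(1 − g(d)/n − ε)n⌉`. Then the probability (fraction of matrices) that `C`
contains a nonzero vector of `λ`-subfield weight less than `d` is at most
`q^{m(1−εn)}`. -/
theorem random_linear_codes_achieve_GV
    {q m : ℕ} (hq : ∃ p s : ℕ, p.Prime ∧ 0 < s ∧ q = p ^ s) (hm : 2 ≤ m)
    {K : Type*} [Field K] [Fintype K] (F : Subfield K)
    (hcardF : Fintype.card F = q) (hcardK : Fintype.card K = q ^ m)
    (lam : ℝ) (hlam : 1 / 2 ≤ lam) (n : ℕ) (hn : 0 < n) (d : ℕ)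
    (hd : (d : ℝ) ≤ lam * n) (ε : ℝ) (hε : 0 < ε)
    (g : ℝ)
    (hg : g = Real.logb ((q : ℝ) ^ m)
        ((univ.filter fun x : Fin n → K => wtl F lam x ≤ (d : ℝ)).card : ℝ))
    (k : ℕ) (hk : k = ⌈(1 - g / n - ε) * n⌉₊) :
    ((univ.filter fun G : Matrix (Fin k) (Fin n) K =>
          ∃ v ∈ Submodule.span K (Set.range G), v ≠ 0 ∧ wtl F lam v < (d : ℝ)).card : ℝ) /
        (Fintype.card (Matrix (Fin k) (Fin n) K) : ℝ) ≤
      (q : ℝ) ^ ((m : ℝ) * (1 - ε * n)) := by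
  -- preliminaries
  have hq2 : 2 ≤ q := by
    obtain ⟨p, s, hp, hs, rfl⟩ := hq
    exact le_trans hp.two_le (Nat.le_self_pow hs.ne' p)
  set N := Fintype.card K with hNdef
  have hN1 : 1 < N := by
    rw [hcardK]
    calc 1 < 2 ^ 2 := by norm_num
    _ ≤ q ^ m := Nat.pow_le_pow_left hq2 2 |>.trans (Nat.pow_le_pow_right (by omega) hm)
  have hNpos : (0 : ℝ) < (N : ℝ) := by exact_mod_cast Nat.lt_of_lt_of_le Nat.zero_lt_one hN1.le
  have hNR1 : (1 : ℝ) < (N : ℝ) := by exact_mod_cast hN1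
  have hNq : ((N : ℕ) : ℝ) = (q : ℝ) ^ m := by rw [hcardK]; push_cast; ring
  have hqpos : (0 : ℝ) ≤ (q : ℝ) := by positivity
  -- the case k = 0 : the span is trivial, so the bad set is empty
  rcases Nat.eq_zero_or_pos k with hk0 | hk1
  · subst hk0
    have hempty : (univ.filter fun G : Matrix (Fin 0) (Fin n) K =>
        ∃ v ∈ Submodule.span K (Set.range G), v ≠ 0 ∧ wtl F lam v < (d : ℝ)) = ∅ := by
      refine Finset.filter_eq_empty_iff.mpr fun G _ => ?_
      rintro ⟨v, hv, hv0, -⟩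
      have h0 : Set.range G = (∅ : Set (Fin n → K)) := Set.range_eq_empty _
      rw [h0, Submodule.span_empty, Submodule.mem_bot] at hv
      exact hv0 hv
    rw [hempty]
    simp only [Finset.card_empty, Nat.cast_zero, zero_div]
    positivity
  -- the ball B and its cardinality via g
  set B := univ.filter fun x : Fin n → K => wtl F lam x ≤ (d : ℝ) with hB
  have hB0 : (0 : Fin n → K) ∈ B := by
    rw [hB, Finset.mem_filter]
    refine ⟨mem_univ _, ?_⟩
    have : wtl F lam (0 : Fin n → K) = 0 := by simp [wtl]
    rw [this]
    positivity
  have hBpos : 0 < B.card := Finset.card_pos.mpr ⟨0, hB0⟩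
  have hNg : (N : ℝ) ^ g = (B.card : ℝ) := by
    rw [hg, ← hNq]
    exact Real.rpow_logb hNpos (by exact_mod_cast hN1.ne') (by exact_mod_cast hBpos)
  -- the set of low-weight nonzero vectors
  set S := univ.filter (fun v : Fin n → K => v ≠ 0 ∧ wtl F lam v < (d : ℝ)) with hS
  have hSB : S.card ≤ B.card := by
    refine Finset.card_le_card fun v hv => ?_
    rw [hS, Finset.mem_filter] at hv
    rw [hB, Finset.mem_filter]
    exact ⟨mem_univ _, hv.2.2.le⟩
  -- counting the bad matrices
  set Bad := univ.filter fun G : Matrix (Fin k) (Fin n) K =>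
      ∃ v ∈ Submodule.span K (Set.range G), v ≠ 0 ∧ wtl F lam v < (d : ℝ) with hBad
  have hinner : ∀ v ∈ S,
      (univ.filter fun G : Matrix (Fin k) (Fin n) K =>
        ∃ c : Fin k → K, ∑ i, c i • G i = v).card ≤ N ^ k * (N ^ n) ^ (k - 1) := by
    intro v hv
    rw [hS, Finset.mem_filter] at hv
    have hsub : (univ.filter fun G : Matrix (Fin k) (Fin n) K =>
          ∃ c : Fin k → K, ∑ i, c i • G i = v) ⊆
        (univ.filter fun c : Fin k → K => c ≠ 0).biUnion
          (fun c => univ.filter fun G : Matrix (Fin k) (Fin n) K => ∑ i, c i • G i = v) := by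
      intro G hG
      rw [Finset.mem_filter] at hG
      obtain ⟨-, c, hc⟩ := hG
      have hc0 : c ≠ 0 := by
        rintro rfl
        apply hv.2.1
        rw [← hc]
        simp
      exact Finset.mem_biUnion.mpr ⟨c, by simp [hc0], by simp [hc]⟩
    calc (univ.filter fun G : Matrix (Fin k) (Fin n) K =>
          ∃ c : Fin k → K, ∑ i, c i • G i = v).card
        ≤ ((univ.filter fun c : Fin k → K => c ≠ 0).biUnion
          (fun c => univ.filter fun G : Matrix (Fin k) (Fin n) K => ∑ i, c i • G i = v)).card :=
          Finset.card_le_card hsub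
      _ ≤ ∑ c ∈ univ.filter fun c : Fin k → K => c ≠ 0,
            (univ.filter fun G : Matrix (Fin k) (Fin n) K => ∑ i, c i • G i = v).card :=
          Finset.card_biUnion_le
      _ = ∑ c ∈ univ.filter fun c : Fin k → K => c ≠ 0, (N ^ n) ^ (k - 1) := by
          refine Finset.sum_congr rfl fun c hc => ?_
          rw [Finset.mem_filter] at hc
          exact fiber_card_s19 c hc.2 v
      _ ≤ N ^ k * (N ^ n) ^ (k - 1) := by
          rw [Finset.sum_const, smul_eq_mul]
          have : (univ.filter fun c : Fin k → K => c ≠ 0).card ≤ N ^ k := by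
            calc (univ.filter fun c : Fin k → K => c ≠ 0).card
                ≤ (univ : Finset (Fin k → K)).card := Finset.card_le_card (filter_subset _ _)
              _ = N ^ k := by rw [Finset.card_univ, Fintype.card_fun, Fintype.card_fin]
          exact Nat.mul_le_mul_right _ this
  have key : Bad.card ≤ S.card * (N ^ k * (N ^ n) ^ (k - 1)) := by
    have hsub : Bad ⊆ S.biUnion (fun v => univ.filter fun G : Matrix (Fin k) (Fin n) K =>
        ∃ c : Fin k → K, ∑ i, c i • G i = v) := by
      intro G hG
      rw [hBad, Finset.mem_filter] at hG
      obtain ⟨-, v, hvspan, hv0, hvd⟩ := hG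
      refine Finset.mem_biUnion.mpr ⟨v, by rw [hS]; simp [hv0, hvd], ?_⟩
      rw [Finset.mem_filter]
      exact ⟨mem_univ _, (Submodule.mem_span_range_iff_exists_fun K).mp hvspan⟩
    calc Bad.card ≤ (S.biUnion (fun v => univ.filter fun G : Matrix (Fin k) (Fin n) K =>
          ∃ c : Fin k → K, ∑ i, c i • G i = v)).card := Finset.card_le_card hsub
      _ ≤ ∑ v ∈ S, (univ.filter fun G : Matrix (Fin k) (Fin n) K =>
          ∃ c : Fin k → K, ∑ i, c i • G i = v).card := Finset.card_biUnion_le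
      _ ≤ ∑ v ∈ S, N ^ k * (N ^ n) ^ (k - 1) := Finset.sum_le_sum hinner
      _ = S.card * (N ^ k * (N ^ n) ^ (k - 1)) := by rw [Finset.sum_const, smul_eq_mul]
  -- the cardinality of the space of matrices
  have cardM : (Fintype.card (Matrix (Fin k) (Fin n) K) : ℝ) = ((N : ℝ) ^ n) ^ k := by
    show ((Fintype.card (Fin k → Fin n → K) : ℕ) : ℝ) = _
    rw [Fintype.card_fun, Fintype.card_fun, Fintype.card_fin, Fintype.card_fin]
    push_cast
    ring
  -- exponent inequality
  have hnR : (0 : ℝ) < (n : ℝ) := by exact_mod_cast hn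
  have hexp : g + (k : ℝ) - (n : ℝ) ≤ 1 - ε * n := by
    have hx : (0 : ℝ) < (1 - g / n - ε) * n := by
      by_contra h
      push_neg at h
      rw [hk] at hk1
      have := Nat.ceil_pos.mp hk1
      linarith
    have hkx : (k : ℝ) < (1 - g / n - ε) * n + 1 := by
      rw [hk]
      exact Nat.ceil_lt_add_one hx.le
    have hgn : g / n * n = g := div_mul_cancel₀ g hnR.ne'
    nlinarith [hkx, hgn]
  -- put it all together over ℝ
  have hkey : (Bad.card : ℝ) ≤ (N : ℝ) ^ g * ((N : ℝ) ^ k * ((N : ℝ) ^ n) ^ (k - 1)) := by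
    calc (Bad.card : ℝ) ≤ (S.card : ℝ) * ((N : ℝ) ^ k * ((N : ℝ) ^ n) ^ (k - 1)) := by
          exact_mod_cast key
      _ ≤ (N : ℝ) ^ g * ((N : ℝ) ^ k * ((N : ℝ) ^ n) ^ (k - 1)) := by
          have hS' : (S.card : ℝ) ≤ (N : ℝ) ^ g := by
            rw [hNg]; exact_mod_cast hSB
          gcongr
  have hrhs : (N : ℝ) ^ g * ((N : ℝ) ^ k * ((N : ℝ) ^ n) ^ (k - 1)) ≤
      (q : ℝ) ^ ((m : ℝ) * (1 - ε * n)) * ((N : ℝ) ^ n) ^ k := by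
    have hqN : (q : ℝ) ^ ((m : ℝ) * (1 - ε * n)) = (N : ℝ) ^ (1 - ε * n) := by
      rw [Real.rpow_mul hqpos, Real.rpow_natCast, ← hNq]
    rw [hqN]
    have e1 : (N : ℝ) ^ g * ((N : ℝ) ^ k * ((N : ℝ) ^ n) ^ (k - 1)) =
        (N : ℝ) ^ (g + (k : ℝ) + (n : ℝ) * ((k : ℝ) - 1)) := by
      rw [← Real.rpow_natCast (N : ℝ) k, ← Real.rpow_natCast (N : ℝ) n,
        ← Real.rpow_natCast ((N : ℝ) ^ ((n : ℕ) : ℝ)) (k - 1), ← Real.rpow_mul hNpos.le,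
        ← Real.rpow_add hNpos, ← Real.rpow_add hNpos]
      congr 1
      rw [Nat.cast_sub hk1]
      push_cast
      ring
    have e2 : (N : ℝ) ^ (1 - ε * n) * ((N : ℝ) ^ n) ^ k =
        (N : ℝ) ^ (1 - ε * n + (n : ℝ) * (k : ℝ)) := by
      rw [← Real.rpow_natCast (N : ℝ) n, ← Real.rpow_natCast ((N : ℝ) ^ ((n : ℕ) : ℝ)) k,
        ← Real.rpow_mul hNpos.le, ← Real.rpow_add hNpos]
    rw [e1, e2]
    apply Real.rpow_le_rpow_of_exponent_le hNR1.le
    nlinarith [hexp]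
  rw [cardM, div_le_iff₀ (by positivity)]
  calc (Bad.card : ℝ) ≤ (N : ℝ) ^ g * ((N : ℝ) ^ k * ((N : ℝ) ^ n) ^ (k - 1)) := hkey
    _ ≤ (q : ℝ) ^ ((m : ℝ) * (1 - ε * n)) * ((N : ℝ) ^ n) ^ k := hrhs
end
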